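/- arXiv:2504.21634 — 2 statements merged into one kernel-verified Lean document; each statement's English description precedes it below -/
import Mathlib

section
/- Let p ∈ ℕ, σ > 0, Δ ≥ 0, and let x, y ∈ ℝᵖ satisfy ‖x − y‖₂ ≤ Δ. Let P₁ and P₂ be the p-dimensional Gaussian measures on ℝᵖ with covariance σ²·I_p and mean vectors x and y respectively. Then for every α > 1, the Rényi divergence of order α between P₁ and P₂ is at most α·Δ²/(2σ²). Consequently, the Gaussian Mechanism M(D) = f(D) + N(0_p, σ²·I_p) applied to a function f : 𝒟 → ℝᵖ of sensitivity Δ_f = max_{D₁∼D₂} ‖f(D₁) − f(D₂)‖₂ satisfies (α, α·Δ_f²/(2σ²))-Rényi differential privacy: for all neighboring databases D₁ ∼ D₂, D_α(P_{M(D₁)} ‖ P_{M(D₂)}) ≤ α·Δ_f²/(2σ²). -/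
open MeasureTheory ProbabilityTheory

/-- Two databases (finite sets of rows) are neighbors if they differ in exactly one row. -/
def Neighbors {Row : Type*} [DecidableEq Row] (D₁ D₂ : Finset Row) : Prop :=
  (symmDiff D₁ D₂).card = 1

/-- The Rényi divergence of order `α` between the `p`-dimensional Gaussian measures with
mean vectors `x` and `y` and covariance `σ² I_p`, expressed via their product densities. -/
noncomputable def gaussRenyiDiv (α : ℝ) {p : ℕ} (σ : ℝ) (x y : Fin p → ℝ) : ℝ :=
  (α - 1)⁻¹ * Real.log (∫ t : Fin p → ℝ,
    (∏ i, gaussianPDFReal (x i) ⟨σ ^ 2, sq_nonneg σ⟩ (t i)) ^ α *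
    (∏ i, gaussianPDFReal (y i) ⟨σ ^ 2, sq_nonneg σ⟩ (t i)) ^ (1 - α))

/-!
Completing the square, `N(μ, v)^α · N(ν, v)^(1-α)` is `exp (α(α-1)(μ-ν)² / (2v))` times the
density of `N(αμ + (1-α)ν, v)`. Taking the product over coordinates and integrating, the Rényi
integral is `exp (α(α-1)‖x-y‖² / (2σ²))`, so the divergence is exactly `α‖x-y‖² / (2σ²)`.
-/

open Real
open scoped NNReal

lemma gaussianPDFReal_rpow_mul_rpow {v : ℝ≥0} (hv : v ≠ 0) (α μ ν t : ℝ) :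
    gaussianPDFReal μ v t ^ α * gaussianPDFReal ν v t ^ (1 - α) =
      exp (α * (α - 1) * (μ - ν) ^ 2 / (2 * v)) *
        gaussianPDFReal (α * μ + (1 - α) * ν) v t := by
  set c := (√(2 * π * v))⁻¹
  have hv_pos : (0 : ℝ) < v := by positivity
  have hc : 0 < c := by positivity
  have hc_mul : c ^ α * c ^ (1 - α) = c := by rw [← rpow_add hc]; norm_num
  -- `α (t - μ)² + (1 - α) (t - ν)² = (t - (αμ + (1 - α)ν))² + α (1 - α) (μ - ν)²`
  have h_exponent : -(t - μ) ^ 2 / (2 * v) * α + -(t - ν) ^ 2 / (2 * v) * (1 - α) =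
      α * (α - 1) * (μ - ν) ^ 2 / (2 * v) + -(t - (α * μ + (1 - α) * ν)) ^ 2 / (2 * v) := by
    field_simp [hv_pos.ne']
    ring
  simp only [gaussianPDFReal_def]
  rw [mul_rpow hc.le (exp_nonneg _), mul_rpow hc.le (exp_nonneg _), ← exp_mul, ← exp_mul]
  calc _ = (c ^ α * c ^ (1 - α)) *
        exp (-(t - μ) ^ 2 / (2 * v) * α + -(t - ν) ^ 2 / (2 * v) * (1 - α)) := by
        rw [exp_add]; ring
    _ = _ := by rw [hc_mul, h_exponent, exp_add]; ring

lemma integral_prod_gaussianPDFReal_rpow_mul_rpow {ι : Type*} [Fintype ι] {v : ℝ≥0} (hv : v ≠ 0)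
    (α : ℝ) (x y : ι → ℝ) :
    ∫ t : ι → ℝ, (∏ i, gaussianPDFReal (x i) v (t i)) ^ α *
      (∏ i, gaussianPDFReal (y i) v (t i)) ^ (1 - α) =
      exp (α * (α - 1) * (∑ i, (x i - y i) ^ 2) / (2 * v)) := by
  have h_integrand (t : ι → ℝ) :
      (∏ i, gaussianPDFReal (x i) v (t i)) ^ α * (∏ i, gaussianPDFReal (y i) v (t i)) ^ (1 - α) =
      exp (α * (α - 1) * (∑ i, (x i - y i) ^ 2) / (2 * v)) *
        ∏ i, gaussianPDFReal (α * x i + (1 - α) * y i) v (t i) := by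
    rw [← finsetProd_rpow _ _ (fun i _ => gaussianPDFReal_nonneg _ _ _),
      ← finsetProd_rpow _ _ (fun i _ => gaussianPDFReal_nonneg _ _ _), ← Finset.prod_mul_distrib]
    simp only [gaussianPDFReal_rpow_mul_rpow hv, Finset.prod_mul_distrib, ← exp_sum,
      Finset.mul_sum, Finset.sum_div]
  simp only [h_integrand, integral_const_mul, integral_fintype_prod_volume_eq_prod,
    integral_gaussianPDFReal_eq_one _ hv, Finset.prod_const_one, mul_one]

lemma gaussRenyiDiv_eq {p : ℕ} {α σ : ℝ} (hα : α ≠ 1) (hσ : σ ≠ 0) (x y : Fin p → ℝ) :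
    gaussRenyiDiv α σ x y = α * (∑ i, (x i - y i) ^ 2) / (2 * σ ^ 2) := by
  have hv : (⟨σ ^ 2, sq_nonneg σ⟩ : ℝ≥0) ≠ 0 :=
    fun h ↦ pow_ne_zero 2 hσ (congrArg NNReal.toReal h)
  rw [gaussRenyiDiv, integral_prod_gaussianPDFReal_rpow_mul_rpow hv, log_exp]
  -- `gaussRenyiDiv` writes the variance as a bare `Subtype.mk`, which `NNReal.coe_mk` misses
  change (α - 1)⁻¹ * (α * (α - 1) * _ / (2 * σ ^ 2)) = _
  field_simp [sub_ne_zero.mpr hα]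

lemma gaussRenyiDiv_le {p : ℕ} {α σ Δ : ℝ} (hα₀ : 0 ≤ α) (hα : α ≠ 1) (hσ : σ ≠ 0)
    {x y : Fin p → ℝ} (hxy : √(∑ i, (x i - y i) ^ 2) ≤ Δ) :
    gaussRenyiDiv α σ x y ≤ α * Δ ^ 2 / (2 * σ ^ 2) := by
  have h_sq : ∑ i, (x i - y i) ^ 2 ≤ Δ ^ 2 := (sqrt_le_iff.mp hxy).2
  rw [gaussRenyiDiv_eq hα hσ]
  gcongr

theorem gaussian_mechanism_rdp_general {Row : Type*} [DecidableEq Row] (p : ℕ) (σ Δ : ℝ)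
    (hσ : 0 < σ) (f : Finset Row → (Fin p → ℝ)) (Δf : ℝ)
    (hsens : IsGreatest
      {d : ℝ | ∃ D₁ D₂ : Finset Row, Neighbors D₁ D₂ ∧
        d = Real.sqrt (∑ i, (f D₁ i - f D₂ i) ^ 2)} Δf) :
    (∀ x y : Fin p → ℝ, Real.sqrt (∑ i, (x i - y i) ^ 2) ≤ Δ → ∀ α : ℝ, 1 < α →
        gaussRenyiDiv α σ x y ≤ α * Δ ^ 2 / (2 * σ ^ 2)) ∧
    (∀ α : ℝ, 1 < α → ∀ D₁ D₂ : Finset Row, Neighbors D₁ D₂ →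
        gaussRenyiDiv α σ (f D₁) (f D₂) ≤ α * Δf ^ 2 / (2 * σ ^ 2)) :=
  ⟨fun _ _ hxy _ hα ↦ gaussRenyiDiv_le (by linarith) hα.ne' hσ.ne' hxy,
    fun _ hα D₁ D₂ hN ↦ gaussRenyiDiv_le (by linarith) hα.ne' hσ.ne' (hsens.2 ⟨D₁, D₂, hN, rfl⟩)⟩

/-- If `‖x - y‖₂ ≤ Δ`, then the Rényi divergence of order `α > 1` between the Gaussians
`N(x, σ²I)` and `N(y, σ²I)` is at most `α Δ² / (2σ²)`.  Consequently, the Gaussian Mechanism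
`M(D) = f(D) + N(0, σ²I)` for a function `f` of sensitivity
`Δf = max_{D₁ ∼ D₂} ‖f(D₁) - f(D₂)‖₂` satisfies `(α, α Δf² / (2σ²))`-Rényi differential
privacy: for all neighboring databases `D₁ ∼ D₂`, the Rényi divergence of order `α` between
the output distributions `N(f(D₁), σ²I)` and `N(f(D₂), σ²I)` is at most `α Δf² / (2σ²)`. -/
theorem gaussian_mechanism_rdp {Row : Type*} [DecidableEq Row] (p : ℕ) (σ Δ : ℝ)
    (hσ : 0 < σ) (hΔ : 0 ≤ Δ) (f : Finset Row → (Fin p → ℝ)) (Δf : ℝ)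
    (hsens : IsGreatest
      {d : ℝ | ∃ D₁ D₂ : Finset Row, Neighbors D₁ D₂ ∧
        d = Real.sqrt (∑ i, (f D₁ i - f D₂ i) ^ 2)} Δf) :
    (∀ x y : Fin p → ℝ, Real.sqrt (∑ i, (x i - y i) ^ 2) ≤ Δ → ∀ α : ℝ, 1 < α →
        gaussRenyiDiv α σ x y ≤ α * Δ ^ 2 / (2 * σ ^ 2)) ∧
    (∀ α : ℝ, 1 < α → ∀ D₁ D₂ : Finset Row, Neighbors D₁ D₂ →
        gaussRenyiDiv α σ (f D₁) (f D₂) ≤ α * Δf ^ 2 / (2 * σ ^ 2)) :=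
  gaussian_mechanism_rdp_general p σ Δ hσ f Δf hsens
end

section
/- Let (Ω, ℱ, P) be a probability space and let S, Ŷ, Y : Ω → {0,1} be measurable (binary) random variables such that P(S = 1, Ŷ = ŷ) > 0 and P(S ≠ 1, Ŷ = ŷ) > 0 for each ŷ ∈ {0,1}. Then S and Y are conditionally independent given Ŷ (the sufficiency fairness criterion) if and only if both equalities P[Y = 1 | S = 1, Ŷ = 1] = P[Y = 1 | S ≠ 1, Ŷ = 1] and P[Y = 0 | S = 1, Ŷ = 0] = P[Y = 0 | S ≠ 1, Ŷ = 0] hold, i.e., if and only if exact conditional use accuracy equality (both the true-positive and true-negative conditions with threshold ε = 0) holds. -/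
/-!
Under `P[|Ŷ = ŷ]`, events `A` and `B` are independent exactly when `P[B | A] = P[B | Aᶜ]`,
and by `cond_cond_eq_cond_inter` these are the conditional probabilities given `{S = 1, Ŷ = ŷ}`
and `{S ≠ 1, Ŷ = ŷ}`. The accuracy equalities are this criterion for `B = {Y = 1}` on `{Ŷ = 1}`
and for `B = {Y = 0}` on `{Ŷ = 0}`; for Boolean variables independence of one pair of level sets
gives the product rule for all four pairs, since every level set of a Boolean variable lies in
the σ-algebra generated by any one of them.
-/

open MeasureTheory ProbabilityTheory MeasurableSpace

namespace ProbabilityTheory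

theorem measurableSet_generateFrom_setOf_eq_bool {Ω : Type*} (f : Ω → Bool) (b₀ b : Bool) :
    MeasurableSet[generateFrom {{ω | f ω = b₀}}] {ω | f ω = b} := by
  by_cases hb : b = b₀
  · exact hb ▸ measurableSet_generateFrom rfl
  · convert (measurableSet_generateFrom (Set.mem_singleton {ω | f ω = b₀})).compl using 1
    ext ω
    cases b <;> cases b₀ <;> simp_all

variable {Ω : Type*} [MeasurableSpace Ω] {μ : Measure Ω} {A B : Set Ω}

theorem indepSet_iff_cond_eq [IsZeroOrProbabilityMeasure μ] (hA : MeasurableSet A)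
    (hB : MeasurableSet B) (hA₀ : μ A ≠ 0) : IndepSet A B μ ↔ μ[B|A] = μ B := by
  rw [indepSet_iff_measure_inter_eq_mul hA hB μ, ← cond_mul_eq_inter hA, mul_comm (μ A),
    ENNReal.mul_left_inj hA₀ (measure_ne_top μ A)]

theorem indepSet_iff_cond_eq_cond_compl [IsProbabilityMeasure μ] (hA : MeasurableSet A)
    (hB : MeasurableSet B) (hA₀ : μ A ≠ 0) (hAc₀ : μ Aᶜ ≠ 0) :
    IndepSet A B μ ↔ μ[B|A] = μ[B|Aᶜ] := by
  constructor
  · intro h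
    have hc : IndepSet Aᶜ B μ :=
      Indep.indepSet_of_measurableSet h
        (measurableSet_generateFrom (Set.mem_singleton A)).compl
        (measurableSet_generateFrom (Set.mem_singleton B))
    rw [(indepSet_iff_cond_eq hA hB hA₀).1 h, (indepSet_iff_cond_eq hA.compl hB hAc₀).1 hc]
  · intro h
    -- `μ B` is the average of the two equal conditional probabilities.
    have hB_eq : μ B = μ[B|A] := by
      rw [← cond_add_cond_compl_eq hA μ, ← h, ← mul_add, measure_add_measure_compl hA,
        measure_univ, mul_one]
    exact (indepSet_iff_cond_eq hA hB hA₀).2 hB_eq.symm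

theorem cond_setOf_and [IsFiniteMeasure μ] {p q : Ω → Prop} (hp : MeasurableSet {ω | p ω})
    (hq : MeasurableSet {ω | q ω}) : μ[|{ω | p ω ∧ q ω}] = μ[|{ω | q ω}][|{ω | p ω}] := by
  rw [cond_cond_eq_cond_inter hq hp, Set.inter_comm]
  rfl

theorem forall_measure_setOf_and_eq_mul_iff_indepSet [IsZeroOrProbabilityMeasure μ]
    {X Y : Ω → Bool} (hX : Measurable X) (hY : Measurable Y) (x₀ y₀ : Bool) :
    (∀ x y : Bool, μ {ω | X ω = x ∧ Y ω = y} = μ {ω | X ω = x} * μ {ω | Y ω = y}) ↔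
      IndepSet {ω | X ω = x₀} {ω | Y ω = y₀} μ := by
  constructor
  · intro h
    exact (indepSet_iff_measure_inter_eq_mul (hX (measurableSet_singleton x₀))
      (hY (measurableSet_singleton y₀)) μ).2 (h x₀ y₀)
  · intro h x y
    exact IndepSet.measure_inter_eq_mul <| Indep.indepSet_of_measurableSet h
      (measurableSet_generateFrom_setOf_eq_bool X x₀ x)
      (measurableSet_generateFrom_setOf_eq_bool Y y₀ y)

end ProbabilityTheory

/-- Sufficiency: a binary protected attribute `S` and a binary ground truth `Y` are
conditionally independent given the binary prediction `Ŷ` if and only if exact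
conditional use accuracy equality holds:
`P[Y = 1 | S = 1, Ŷ = 1] = P[Y = 1 | S ≠ 1, Ŷ = 1]` and
`P[Y = 0 | S = 1, Ŷ = 0] = P[Y = 0 | S ≠ 1, Ŷ = 0]`. -/
theorem condIndep_iff_cond_use_accuracy {Ω : Type*} [MeasurableSpace Ω]
    (P : Measure Ω) [IsProbabilityMeasure P]
    (S Yhat Y : Ω → Bool) (hS : Measurable S) (hYhat : Measurable Yhat) (hY : Measurable Y)
    (hpos : ∀ yh : Bool, 0 < P {ω | S ω = true ∧ Yhat ω = yh} ∧
      0 < P {ω | S ω ≠ true ∧ Yhat ω = yh}) :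
    (∀ yh : Bool, P {ω | Yhat ω = yh} ≠ 0 → ∀ s y : Bool,
        P[|{ω | Yhat ω = yh}] {ω | S ω = s ∧ Y ω = y}
          = P[|{ω | Yhat ω = yh}] {ω | S ω = s} * P[|{ω | Yhat ω = yh}] {ω | Y ω = y}) ↔
      (P[|{ω | S ω = true ∧ Yhat ω = true}] {ω | Y ω = true}
          = P[|{ω | S ω ≠ true ∧ Yhat ω = true}] {ω | Y ω = true} ∧
        P[|{ω | S ω = true ∧ Yhat ω = false}] {ω | Y ω = false}
          = P[|{ω | S ω ≠ true ∧ Yhat ω = false}] {ω | Y ω = false}) := by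
  have hS_true : MeasurableSet {ω | S ω = true} := hS (measurableSet_singleton true)
  have hYhat_meas (yh : Bool) : MeasurableSet {ω | Yhat ω = yh} :=
    hYhat (measurableSet_singleton yh)
  have hYhat₀ (yh : Bool) : P {ω | Yhat ω = yh} ≠ 0 :=
    ((hpos yh).1.trans_le (measure_mono fun _ hω => hω.2)).ne'
  have _ (yh : Bool) : IsProbabilityMeasure P[|{ω | Yhat ω = yh}] :=
    cond_isProbabilityMeasure (hYhat₀ yh)
  have hacc (yh y : Bool) :
      P[|{ω | S ω = true ∧ Yhat ω = yh}] {ω | Y ω = y}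
          = P[|{ω | S ω ≠ true ∧ Yhat ω = yh}] {ω | Y ω = y} ↔
        IndepSet {ω | S ω = true} {ω | Y ω = y} P[|{ω | Yhat ω = yh}] := by
    have hS_true₀ : P ({ω | Yhat ω = yh} ∩ {ω | S ω = true}) ≠ 0 := by
      rw [Set.inter_comm]; exact (hpos yh).1.ne'
    have hS_false₀ : P ({ω | Yhat ω = yh} ∩ {ω | S ω = true}ᶜ) ≠ 0 := by
      rw [Set.inter_comm]; exact (hpos yh).2.ne'
    rw [cond_setOf_and hS_true (hYhat_meas yh),
      cond_setOf_and (p := fun ω => S ω ≠ true) hS_true.compl (hYhat_meas yh)]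
    exact (indepSet_iff_cond_eq_cond_compl hS_true (hY (measurableSet_singleton y))
      (cond_pos_of_inter_ne_zero (hYhat_meas yh) hS_true₀).ne'
      (cond_pos_of_inter_ne_zero (hYhat_meas yh) hS_false₀).ne').symm
  calc _ ↔ ∀ yh, IndepSet {ω | S ω = true} {ω | Y ω = yh} P[|{ω | Yhat ω = yh}] :=
        forall_congr' fun yh => (imp_iff_right (hYhat₀ yh)).trans
          (forall_measure_setOf_and_eq_mul_iff_indepSet hS hY true yh)
    _ ↔ _ := by rw [Bool.forall_bool, ← hacc, ← hacc, and_comm]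
end
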